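/- arXiv:2501.03232 — 2 statements merged into one kernel-verified Lean document; each statement's English description precedes it below -/
import Mathlib

section
/- The localization sum over the six 2-element subsets I = {i1 < i2} of {1,2,3,4} of ∏_{a=0}^{3}(a·λ_{i1} + (3−a)·λ_{i2}) divided by ∏_{i∈I, j∉I}(λ_i − λ_j) equals 27, for generic λ_1, λ_2, λ_3, λ_4. -/
open Finset

/-!
The sum is the Atiyah–Bott localization formula for the Euler class of `Sym³ S^*` on the
Grassmannian `G(2, 4)`, with respect to a torus acting on `K⁴` with weights `λᵢ`: a fixed point is
a coordinate plane `I`, the numerator is the product of the weights of `Sym³` of its dual, and the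
denominator is the product of the tangent weights. As a rational function of the `λᵢ` the sum is
homogeneous of degree `0` and has no poles, hence is a constant; concretely, clearing the
Vandermonde denominator turns the claim into a polynomial identity.
-/

theorem Fin.sum_sum_Ioi_four {M : Type*} [AddCommMonoid M] (f : Fin 4 → Fin 4 → M) :
    ∑ i : Fin 4, ∑ j ∈ Ioi i, f i j = f 0 1 + f 0 2 + f 0 3 + f 1 2 + f 1 3 + f 2 3 := by
  simp [Fin.sum_univ_four, show Ioi (0 : Fin 4) = {1, 2, 3} by decide,
    show Ioi (1 : Fin 4) = {2, 3} by decide, show Ioi (2 : Fin 4) = {3} by decide,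
    show Ioi (3 : Fin 4) = ∅ by decide, add_assoc]

theorem prod_range_four_sym_three_weights {R : Type*} [CommRing R] (x y : R) :
    ∏ a ∈ range 4, ((a : R) * x + ((3 - a : ℕ) : R) * y) =
      9 * x * y * (2 * x + y) * (x + 2 * y) := by
  simp only [prod_range_succ, prod_range_zero]
  push_cast
  ring

theorem sum_localization_cubic_surface_eq_27 {K : Type*} [Field K] {a b c d : K}
    (hab : a ≠ b) (hac : a ≠ c) (had : a ≠ d) (hbc : b ≠ c) (hbd : b ≠ d) (hcd : c ≠ d) :
    let w : K → K → K := fun x y ↦ 9 * x * y * (2 * x + y) * (x + 2 * y)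
    w a b / ((a - c) * (b - c) * ((a - d) * (b - d))) +
      w a c / ((a - b) * (c - b) * ((a - d) * (c - d))) +
      w a d / ((a - b) * (d - b) * ((a - c) * (d - c))) +
      w b c / ((b - a) * (c - a) * ((b - d) * (c - d))) +
      w b d / ((b - a) * (d - a) * ((b - c) * (d - c))) +
      w c d / ((c - a) * (d - a) * ((c - b) * (d - b))) = 27 := by
  have := sub_ne_zero.2 hab; have := sub_ne_zero.2 hab.symm
  have := sub_ne_zero.2 hac; have := sub_ne_zero.2 hac.symm
  have := sub_ne_zero.2 had; have := sub_ne_zero.2 had.symm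
  have := sub_ne_zero.2 hbc; have := sub_ne_zero.2 hbc.symm
  have := sub_ne_zero.2 hbd; have := sub_ne_zero.2 hbd.symm
  have := sub_ne_zero.2 hcd; have := sub_ne_zero.2 hcd.symm
  field_simp
  ring

theorem localization_27_lines_general {K : Type*} [Field K]
    (l : Fin 4 → K) (hl : Function.Injective l) :
    (∑ i : Fin 4, ∑ j ∈ Finset.Ioi i,
      (∏ a ∈ Finset.range 4, ((a : K) * l i + ((3 - a : ℕ) : K) * l j)) /
        ∏ k ∈ (Finset.univ \ {i, j} : Finset (Fin 4)),
          ((l i - l k) * (l j - l k))) = 27 := by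
  rw [Fin.sum_sum_Ioi_four]
  simp only [prod_range_four_sym_three_weights,
    show (univ \ {0, 1} : Finset (Fin 4)) = {2, 3} by decide,
    show (univ \ {0, 2} : Finset (Fin 4)) = {1, 3} by decide,
    show (univ \ {0, 3} : Finset (Fin 4)) = {1, 2} by decide,
    show (univ \ {1, 2} : Finset (Fin 4)) = {0, 3} by decide,
    show (univ \ {1, 3} : Finset (Fin 4)) = {0, 2} by decide,
    show (univ \ {2, 3} : Finset (Fin 4)) = {0, 1} by decide]
  simp only [prod_pair (by decide : (0 : Fin 4) ≠ 1), prod_pair (by decide : (0 : Fin 4) ≠ 2),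
    prod_pair (by decide : (0 : Fin 4) ≠ 3), prod_pair (by decide : (1 : Fin 4) ≠ 2),
    prod_pair (by decide : (1 : Fin 4) ≠ 3), prod_pair (by decide : (2 : Fin 4) ≠ 3)]
  exact sum_localization_cubic_surface_eq_27 (hl.ne (by decide)) (hl.ne (by decide))
    (hl.ne (by decide)) (hl.ne (by decide)) (hl.ne (by decide)) (hl.ne (by decide))

/-- Localization computation of the 27 lines on a cubic surface:
the sum over 2-element subsets `{i < j}` of `{1,2,3,4}` of
`∏_{a=0}^{3} (a λᵢ + (3-a) λⱼ) / ∏_{m ∈ {i,j}, k ∉ {i,j}} (λ_m - λ_k)`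
equals `27`. -/
theorem localization_27_lines {K : Type*} [Field K] [CharZero K]
    (l : Fin 4 → K) (hl : Function.Injective l) :
    (∑ i : Fin 4, ∑ j ∈ Finset.Ioi i,
      (∏ a ∈ Finset.range 4, ((a : K) * l i + ((3 - a : ℕ) : K) * l j)) /
        ∏ k ∈ (Finset.univ \ {i, j} : Finset (Fin 4)),
          ((l i - l k) * (l j - l k))) = 27 :=
  localization_27_lines_general l hl
end

section
/- The localization sum over the ten 2-element subsets I = {i1 < i2} of {1,...,5} of ∏_{a=0}^{5}(a·λ_{i1} + (5−a)·λ_{i2}) divided by ∏_{i∈I, j∉I}(λ_i − λ_j) equals 2875, for pairwise distinct λ_1,...,λ_5. -/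
/-!
Write `D i = ∏_{k ≠ i} (λ_i - λ_k)`. The denominator of the `{i, j}` term is
`-D_i D_j / (λ_i - λ_j)²`, so the sum is half of `∑_{i,j} h(λ_i, λ_j) / (D_i D_j)` with
`h(x, y) = -(x - y)² ∏_a (a x + (5 - a) y)`, a symmetric form of degree 8 vanishing on the diagonal.
By Lagrange interpolation `∑_i λ_i^m / D_i` is `0` for `m < 4` and `1` for `m = 4`, so of the
monomials `x^a y^(8-a)` only `x⁴y⁴` contributes, and its coefficient in `h` is `5750 = 2 · 2875`.
-/

open Finset Polynomial

section Localization

variable {F : Type*} [Field F] {ι : Type*} [DecidableEq ι] {s : Finset ι} {v : ι → F}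

theorem sum_pow_div_prod_sub_erase {d m : ℕ} (hv : Set.InjOn v s) (hs : #s = d + 1) (hm : m ≤ d) :
    ∑ i ∈ s, v i ^ m / ∏ j ∈ s.erase i, (v i - v j) = if d = m then 1 else 0 := by
  have hdeg : (X ^ m : F[X]).degree < #s := by
    rw [degree_X_pow, hs]; exact_mod_cast Nat.lt_succ_of_le hm
  simpa [hs, coeff_X_pow] using (Lagrange.coeff_eq_sum hv hdeg).symm

theorem sum_sum_homogeneous_div_prod_sub_erase {d : ℕ} (hv : Set.InjOn v s) (hs : #s = d + 1)
    (c : ℕ → F) :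
    ∑ i ∈ s, ∑ j ∈ s, (∑ a ∈ range (2 * d + 1), c a * v i ^ a * v j ^ (2 * d - a)) /
      ((∏ k ∈ s.erase i, (v i - v k)) * ∏ k ∈ s.erase j, (v j - v k)) = c d := by
  set S : ℕ → F := fun m ↦ ∑ i ∈ s, v i ^ m / ∏ j ∈ s.erase i, (v i - v j)
  have hS : ∀ m ≤ d, S m = if d = m then 1 else 0 := fun m hm ↦ sum_pow_div_prod_sub_erase hv hs hm
  have hSS : ∀ a ≤ 2 * d, S a * S (2 * d - a) = if d = a then 1 else 0 := by
    intro a ha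
    rcases lt_trichotomy a d with had | rfl | had
    · simp [hS a had.le, had.ne']
    · simp [hS a le_rfl, show 2 * a - a = a by omega]
    · simp [hS (2 * d - a) (by omega), had.ne, show d ≠ 2 * d - a by omega]
  calc _ = ∑ a ∈ range (2 * d + 1), c a * (S a * S (2 * d - a)) := by
        simp only [S, sum_mul_sum]
        simp only [mul_sum, sum_div]
        conv_rhs => rw [sum_comm]
        refine sum_congr rfl fun i _ ↦ ?_
        rw [sum_comm]
        refine sum_congr rfl fun j _ ↦ sum_congr rfl fun a _ ↦ ?_
        ring
    _ = c d := by
        rw [sum_congr rfl fun a ha ↦ by rw [hSS a (Nat.lt_succ_iff.mp (mem_range.mp ha))]]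
        simp [show d < 2 * d + 1 by omega]

theorem prod_sdiff_pair_mul_neg_sq {R : Type*} [CommRing R] {w : ι → R} {i j : ι} (hi : i ∈ s)
    (hj : j ∈ s) (hij : i ≠ j) :
    (∏ k ∈ s \ {i, j}, (w i - w k) * (w j - w k)) * -(w i - w j) ^ 2 =
      (∏ k ∈ s.erase i, (w i - w k)) * ∏ k ∈ s.erase j, (w j - w k) := by
  have hi' : s.erase i = insert j (s \ {i, j}) := by ext; grind
  have hj' : s.erase j = insert i (s \ {i, j}) := by ext; grind
  rw [hi', hj', prod_insert (by simp), prod_insert (by simp), prod_mul_distrib]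
  ring

theorem div_prod_sdiff_pair_eq {i j : ι} (hi : i ∈ s) (hj : j ∈ s) (hv : v i ≠ v j) (z : F) :
    z / ∏ k ∈ s \ {i, j}, (v i - v k) * (v j - v k) =
      -(v i - v j) ^ 2 * z / ((∏ k ∈ s.erase i, (v i - v k)) * ∏ k ∈ s.erase j, (v j - v k)) := by
  rw [← prod_sdiff_pair_mul_neg_sq hi hj (ne_of_apply_ne v hv), mul_comm _ z,
    mul_div_mul_right _ _ (neg_ne_zero.mpr (pow_ne_zero 2 (sub_ne_zero.mpr hv)))]

end Localization

theorem two_nsmul_sum_sum_Ioi {α M : Type*} [LinearOrder α] [Fintype α]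
    [LocallyFiniteOrderTop α] [LocallyFiniteOrderBot α] [AddCommMonoid M] (G : α → α → M)
    (hG : ∀ i j, G i j = G j i) (hdiag : ∀ i, G i i = 0) :
    2 • ∑ i, ∑ j ∈ Ioi i, G i j = ∑ i, ∑ j, G i j := by
  calc 2 • ∑ i, ∑ j ∈ Ioi i, G i j = ∑ i, ∑ j ∈ Ioi i, (G j i + G i j) := by
        simp only [smul_sum, two_nsmul, hG]
    _ = ∑ i, ∑ j ∈ {i}ᶜ, G i j := by
        rw [sum_sum_Ioi_add_eq_sum_sum_off_diag]; simp only [hG]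
    _ = ∑ i, ∑ j, G i j := by
        refine sum_congr rfl fun i _ ↦ ?_
        rw [← add_sum_erase _ _ (mem_univ i), hdiag, zero_add, compl_eq_univ_sdiff,
          sdiff_singleton_eq_erase]

section QuinticEulerWeight

variable {K : Type*} [CommRing K]

/-- The equivariant Euler class of `Sym⁵ S^*` at the torus-fixed line with weights `x, y`. -/
def quinticEulerWeight (x y : K) : K :=
  ∏ a ∈ range 6, ((a : K) * x + ((5 - a : ℕ) : K) * y)

theorem quinticEulerWeight_comm (x y : K) :
    quinticEulerWeight x y = quinticEulerWeight y x := by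
  simp only [quinticEulerWeight, prod_range_succ, prod_range_zero]
  push_cast
  ring

theorem neg_sq_sub_mul_quinticEulerWeight (x y : K) :
    -(x - y) ^ 2 * quinticEulerWeight x y =
      ∑ a ∈ range (2 * 4 + 1),
        [0, -600, -2650, 375, 5750, 375, -2650, -600, 0].getD a 0 * x ^ a * y ^ (2 * 4 - a) := by
  simp only [quinticEulerWeight, prod_range_succ, prod_range_zero, sum_range_succ, sum_range_zero,
    List.getD_cons_succ, List.getD_cons_zero]
  push_cast
  ring

end QuinticEulerWeight

/-- Localization computation of the 2875 lines on a quintic threefold: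
the sum over 2-element subsets `{i < j}` of `{1,…,5}` of
`∏_{a=0}^{5} (a λᵢ + (5-a) λⱼ) / ∏_{m ∈ {i,j}, k ∉ {i,j}} (λ_m - λ_k)`
equals `2875`. -/
theorem localization_2875_lines {K : Type*} [Field K] [CharZero K]
    (l : Fin 5 → K) (hl : Function.Injective l) :
    (∑ i : Fin 5, ∑ j ∈ Finset.Ioi i,
      (∏ a ∈ Finset.range 6, ((a : K) * l i + ((5 - a : ℕ) : K) * l j)) /
        ∏ k ∈ (Finset.univ \ {i, j} : Finset (Fin 5)),
          ((l i - l k) * (l j - l k))) = 2875 := by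
  set G : Fin 5 → Fin 5 → K := fun i j ↦ -(l i - l j) ^ 2 * quinticEulerWeight (l i) (l j) /
    ((∏ k ∈ univ.erase i, (l i - l k)) * ∏ k ∈ univ.erase j, (l j - l k))
  have hG_comm (i j : Fin 5) : G i j = G j i := by
    simp only [G, quinticEulerWeight_comm (l i), mul_comm (∏ k ∈ univ.erase i, _)]
    ring
  calc _ = ∑ i, ∑ j ∈ Ioi i, G i j :=
        sum_congr rfl fun i _ ↦ sum_congr rfl fun j hj ↦ div_prod_sdiff_pair_eq (mem_univ i)
          (mem_univ j) (hl.ne (mem_Ioi.mp hj).ne) _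
    _ = (∑ i, ∑ j, G i j) / 2 := by
        rw [← two_nsmul_sum_sum_Ioi G hG_comm (fun i ↦ by simp [G]), nsmul_eq_mul]
        push_cast
        ring
    _ = 2875 := by
        simp only [G, neg_sq_sub_mul_quinticEulerWeight]
        rw [sum_sum_homogeneous_div_prod_sub_erase hl.injOn (d := 4) (by simp)]
        norm_num
end
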